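/- arXiv:1203.2260 — 2 statements merged into one kernel-verified Lean document; each statement's English description precedes it below -/
import Mathlib

section
/- Let A be a compact Hausdorff second-countable abelian group, let n ≥ 1 and 0 ≤ k ≤ n−1 be integers, let c : {0,1}ⁿ → A be a degree-k cube, and let f : {0,1}ⁿ → Â be a map into the group of continuous characters of A such that for every (n−k)-dimensional face S of {0,1}ⁿ one has ∏_{v ∈ S} f(v)^{ε(v)} = 1 (the trivial character), where ε(v) = (−1)^{h(v)}. Then ∏_{v ∈ {0,1}ⁿ} f(v)(c(v))^{ε(v)} = 1 in the circle group. -/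
/-!
Möbius inversion on the Boolean lattice. For `T ⊆ {1,…,n}` let the lower face of `T` be the
vertices supported in `T` (a face of dimension `|T|`) and the upper face the vertices whose
support contains `T` (dimension `n - |T|`). Since `∑_{w ⊆ T ⊆ v} (-1)^|T|` vanishes unless
`w = v`, the alternating pairing `∑_v ε(v) ⟨c v, f v⟩` equals
`∑_T ± ⟨alternating sum of c over the upper face of T, alternating sum of f over the lower face
of T⟩`. Vanishing of alternating sums on all faces of one dimension propagates to all higher
dimensions (split a face along a free coordinate), and as `(n - k) + (k + 1) = n + 1`, for each
`T` one of the two faces is large enough. The characters enter as homomorphisms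
`A →+ Additive ℂˣ`, making the product such a pairing.
-/

open scoped BigOperators

/-- The height `h(v)` of a vertex `v ∈ {0,1}ⁿ`: the number of `1` coordinates. -/
def ht {n : ℕ} (v : Fin n → Bool) : ℕ := (Finset.univ.filter (fun i => v i = true)).card

/-- `S` is a `d`-dimensional face of the cube `{0,1}ⁿ`: the set of vertices obtained by
fixing the coordinates outside some `d`-element subset `J` of the coordinates to
prescribed values. -/
def IsFace {n : ℕ} (d : ℕ) (S : Finset (Fin n → Bool)) : Prop :=
  ∃ (J : Finset (Fin n)) (y : Fin n → Bool), J.card = d ∧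
    S = Finset.univ.filter (fun v => ∀ i ∉ J, v i = y i)

/-- `c : {0,1}ⁿ → B` is a degree-`k` cube: the alternating sum of `c` over every
`(k+1)`-dimensional face vanishes. -/
def IsDegCube {B : Type*} [AddCommGroup B] {n : ℕ} (k : ℕ) (c : (Fin n → Bool) → B) : Prop :=
  ∀ S : Finset (Fin n → Bool), IsFace (k + 1) S →
    ∑ v ∈ S, ((-1 : ℤ) ^ ht v) • c v = 0

open Finset

theorem Finset.sum_Icc_neg_one_pow_card {α : Type*} [DecidableEq α] (s t : Finset α) :
    ∑ u ∈ Icc s t, (-1 : ℤ) ^ u.card = if s = t then (-1) ^ s.card else 0 := by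
  by_cases hst : s ⊆ t
  · have hdisj : ∀ u ∈ (t \ s).powerset, Disjoint s u := fun u hu =>
      disjoint_sdiff.mono_right (mem_powerset.mp hu)
    rw [Icc_eq_image_powerset hst, sum_image fun u hu v hv huv => by
      simpa [union_sdiff_cancel_left (hdisj u hu), union_sdiff_cancel_left (hdisj v hv)]
        using congrArg (· \ s) huv]
    rw [sum_congr rfl fun u hu => by rw [card_union_of_disjoint (hdisj u hu), pow_add],
      ← mul_sum, sum_powerset_neg_one_pow_card]
    have hempty : t \ s = ∅ ↔ s = t :=
      ⟨fun h => hst.antisymm (sdiff_eq_empty_iff_subset.mp h), fun h => h ▸ sdiff_self⟩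
    simp only [hempty]
    split_ifs <;> simp
  · rw [Icc_eq_empty hst, if_neg (by rintro rfl; exact hst subset_rfl), sum_empty]

section Cube

variable {n : ℕ}

def cubeFace (J : Finset (Fin n)) (y : Fin n → Bool) : Finset (Fin n → Bool) :=
  univ.filter fun v => ∀ i ∉ J, v i = y i

theorem isFace_cubeFace (J : Finset (Fin n)) (y : Fin n → Bool) :
    IsFace J.card (cubeFace J y) :=
  ⟨J, y, rfl, rfl⟩

theorem filter_cubeFace_eq {J : Finset (Fin n)} {j : Fin n} (hj : j ∈ J) (y : Fin n → Bool)
    (b : Bool) :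
    (cubeFace J y).filter (fun v => v j = b) = cubeFace (J.erase j) (Function.update y j b) := by
  ext v
  simp only [cubeFace, mem_filter, mem_univ, true_and, mem_erase, Function.update_apply]
  constructor
  · rintro ⟨hv, rfl⟩ i hi
    split_ifs with hij
    · rw [hij]
    · exact hv i (by tauto)
  · intro hv
    refine ⟨fun i hi => ?_, by simpa using hv j⟩
    simpa [show i ≠ j by rintro rfl; exact hi hj] using hv i (by tauto)

def ones (v : Fin n → Bool) : Finset (Fin n) := univ.filter fun i => v i = true

theorem card_ones (v : Fin n → Bool) : (ones v).card = ht v := rfl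

theorem ones_injective : Function.Injective (ones (n := n)) := by
  intro v w h
  funext i
  have hi : v i = true ↔ w i = true := by simpa [ones] using congrArg (i ∈ ·) h
  exact Bool.eq_iff_iff.mpr hi

def lowerFace (T : Finset (Fin n)) : Finset (Fin n → Bool) := cubeFace T fun _ => false

def upperFace (T : Finset (Fin n)) : Finset (Fin n → Bool) := cubeFace Tᶜ fun _ => true

theorem mem_lowerFace {T : Finset (Fin n)} {w : Fin n → Bool} :
    w ∈ lowerFace T ↔ ones w ⊆ T := by
  simp [lowerFace, cubeFace, ones, subset_iff, not_imp_comm]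

theorem mem_upperFace {T : Finset (Fin n)} {v : Fin n → Bool} :
    v ∈ upperFace T ↔ T ⊆ ones v := by
  simp [upperFace, cubeFace, ones, subset_iff]

theorem isFace_lowerFace (T : Finset (Fin n)) : IsFace T.card (lowerFace T) :=
  isFace_cubeFace T _

theorem isFace_upperFace (T : Finset (Fin n)) : IsFace (n - T.card) (upperFace T) := by
  have := isFace_cubeFace Tᶜ fun _ => true
  rwa [card_compl, Fintype.card_fin] at this

end Cube

section AltSum

variable {n : ℕ} {M N P : Type*} [AddCommGroup M] [AddCommGroup N] [AddCommGroup P]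

def altSum (S : Finset (Fin n → Bool)) (g : (Fin n → Bool) → M) : M :=
  ∑ v ∈ S, ((-1 : ℤ) ^ ht v) • g v

def AltSumsVanish (d : ℕ) (g : (Fin n → Bool) → M) : Prop :=
  ∀ S, IsFace d S → altSum S g = 0

theorem AltSumsVanish.mono {d e : ℕ} {g : (Fin n → Bool) → M} (h : AltSumsVanish d g)
    (hde : d ≤ e) : AltSumsVanish e g := by
  induction e, hde using Nat.le_induction with
  | base => exact h
  | succ e _ ih =>
    rintro _ ⟨J, y, hJ, rfl⟩
    obtain ⟨j, hj⟩ := card_pos.mp (by rw [hJ]; exact e.succ_pos)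
    have hcard : (J.erase j).card = e := by rw [card_erase_of_mem hj, hJ]; rfl
    change ∑ v ∈ cubeFace J y, _ = 0
    rw [← sum_fiberwise _ (fun v => v j)]
    refine sum_eq_zero fun b _ => ?_
    rw [filter_cubeFace_eq hj]
    exact ih _ (hcard ▸ isFace_cubeFace _ _)

theorem altSum_pairing_eq_sum_upperFace_lowerFace (B : M →+ N →+ P)
    (c : (Fin n → Bool) → M) (f : (Fin n → Bool) → N) :
    altSum univ (fun v => B (c v) (f v)) = ∑ T : Finset (Fin n),
      (-1 : ℤ) ^ T.card • B (altSum (upperFace T) c) (altSum (lowerFace T) f) := by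
  have hsign : ∀ w v : Fin n → Bool,
      (∑ T ∈ Icc (ones w) (ones v), (-1 : ℤ) ^ T.card) * ((-1) ^ ht w * (-1) ^ ht v) =
        if w = v then (-1) ^ ht w else 0 := by
    intro w v
    simp only [sum_Icc_neg_one_pow_card, ones_injective.eq_iff, card_ones]
    split_ifs with h
    · subst h
      simp [← mul_pow]
    · simp
  symm
  calc ∑ T : Finset (Fin n),
        (-1 : ℤ) ^ T.card • B (altSum (upperFace T) c) (altSum (lowerFace T) f)
      = ∑ T : Finset (Fin n), ∑ p ∈ lowerFace T ×ˢ upperFace T,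
          ((-1 : ℤ) ^ T.card * ((-1) ^ ht p.1 * (-1) ^ ht p.2)) • B (c p.2) (f p.1) := by
        simp only [altSum, sum_product, map_sum, map_zsmul, AddMonoidHom.finsetSum_apply,
          AddMonoidHom.coe_smul, Pi.smul_apply, smul_sum, mul_smul]
    _ = ∑ p : (Fin n → Bool) × (Fin n → Bool), ∑ T ∈ Icc (ones p.1) (ones p.2),
          ((-1 : ℤ) ^ T.card * ((-1) ^ ht p.1 * (-1) ^ ht p.2)) • B (c p.2) (f p.1) :=
        sum_comm' fun T p => by simp [mem_lowerFace, mem_upperFace]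
    _ = altSum univ (fun v => B (c v) (f v)) := by
        simp [← sum_smul, ← sum_mul, hsign, altSum, ite_smul, Fintype.sum_prod_type]

theorem altSum_pairing_eq_zero (B : M →+ N →+ P) {d e : ℕ} (hde : d + e ≤ n + 1)
    {c : (Fin n → Bool) → M} {f : (Fin n → Bool) → N} (hc : AltSumsVanish e c)
    (hf : AltSumsVanish d f) : altSum univ (fun v => B (c v) (f v)) = 0 := by
  rw [altSum_pairing_eq_sum_upperFace_lowerFace]
  refine sum_eq_zero fun T _ => ?_
  rcases le_or_gt d T.card with hT | hT
  · rw [hf.mono hT _ (isFace_lowerFace T), map_zero, smul_zero]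
  · rw [hc.mono (by omega) _ (isFace_upperFace T), map_zero, AddMonoidHom.zero_apply, smul_zero]

theorem altSum_apply (S : Finset (Fin n → Bool)) (g : (Fin n → Bool) → M →+ P) (a : M) :
    altSum S g a = altSum S (fun v => g v a) := by
  simp [altSum, AddMonoidHom.finsetSum_apply]

theorem val_toMul_altSum {K : Type*} [DivisionCommMonoid K] (S : Finset (Fin n → Bool))
    (x : (Fin n → Bool) → Additive Kˣ) :
    ((altSum S x).toMul : K) = ∏ v ∈ S, ((x v).toMul : K) ^ ((-1 : ℤ) ^ ht v) := by
  simp [altSum, toMul_sum, toMul_zsmul, Units.coe_prod, Units.val_zpow_eq_zpow_val]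

end AltSum

def addMonoidHomUnitsOfMul {A K : Type*} [AddGroup A] [CommGroupWithZero K] (g : A → K)
    (hg₀ : ∀ a, g a ≠ 0) (hg : ∀ a b, g (a + b) = g a * g b) : A →+ Additive Kˣ :=
  AddMonoidHom.mk' (fun a => .ofMul (Units.mk0 (g a) (hg₀ a))) fun a b => by
    apply Additive.toMul.injective
    ext
    simp [hg]

@[simp]
theorem val_toMul_addMonoidHomUnitsOfMul {A K : Type*} [AddGroup A] [CommGroupWithZero K]
    (g : A → K) (hg₀ : ∀ a, g a ≠ 0) (hg : ∀ a b, g (a + b) = g a * g b) (a : A) :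
    ((addMonoidHomUnitsOfMul g hg₀ hg a).toMul : K) = g a :=
  rfl

theorem character_cube_pairing_general
    {A : Type*} [AddCommGroup A]
    (n : ℕ) (k : ℕ) (hk : k ≤ n - 1)
    (c : (Fin n → Bool) → A) (hc : IsDegCube k c)
    (f : (Fin n → Bool) → A → ℂ)
    (hχnorm : ∀ v a, ‖f v a‖ = 1)
    (hχmul : ∀ v a b, f v (a + b) = f v a * f v b)
    (hface : ∀ S : Finset (Fin n → Bool), IsFace (n - k) S →
      ∀ a : A, ∏ v ∈ S, (f v a) ^ ((-1 : ℤ) ^ ht v) = 1) :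
    ∏ v : Fin n → Bool, (f v (c v)) ^ ((-1 : ℤ) ^ ht v) = 1 := by
  have hf₀ : ∀ v a, f v a ≠ 0 := fun v a => norm_ne_zero_iff.mp (by simp [hχnorm])
  let χ v := addMonoidHomUnitsOfMul (f v) (hf₀ v) (hχmul v)
  have hχ : AltSumsVanish (n - k) χ := by
    intro S hS
    ext a : 1
    rw [AddMonoidHom.zero_apply, altSum_apply]
    apply Additive.toMul.injective
    apply Units.ext
    simpa [val_toMul_altSum, χ] using hface S hS a
  have := altSum_pairing_eq_zero AddMonoidHom.eval (by omega) hc hχ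
  simpa [val_toMul_altSum, χ] using congrArg (fun x => ((Additive.toMul x : ℂˣ) : ℂ)) this

/-- if `c : {0,1}ⁿ → A` is a degree-`k` cube in a compact abelian group `A`
and `f` assigns a continuous character of `A` to each vertex so that the alternating
product of the characters over every `(n−k)`-dimensional face is the trivial character,
then `∏_{v ∈ {0,1}ⁿ} f(v)(c(v))^{(−1)^{h(v)}} = 1`. -/
theorem character_cube_pairing
    {A : Type*} [AddCommGroup A] [TopologicalSpace A] [IsTopologicalAddGroup A]
    [CompactSpace A] [T2Space A] [SecondCountableTopology A]
    (n : ℕ) (hn : 1 ≤ n) (k : ℕ) (hk : k ≤ n - 1)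
    (c : (Fin n → Bool) → A) (hc : IsDegCube k c)
    (f : (Fin n → Bool) → A → ℂ)
    (hχcont : ∀ v, Continuous (f v))
    (hχnorm : ∀ v a, ‖f v a‖ = 1)
    (hχmul : ∀ v a b, f v (a + b) = f v a * f v b)
    (hface : ∀ S : Finset (Fin n → Bool), IsFace (n - k) S →
      ∀ a : A, ∏ v ∈ S, (f v a) ^ ((-1 : ℤ) ^ ht v) = 1) :
    ∏ v : Fin n → Bool, (f v (c v)) ^ ((-1 : ℤ) ^ ht v) = 1 :=
  character_cube_pairing_general n k hk c hc f hχnorm hχmul hface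
end

section
/- Let A be a compact Hausdorff second-countable abelian group, let n ≥ 1 and 0 ≤ k ≤ n−1 be integers, let c : {0,1}ⁿ → A be a degree-k cube with c(0) = 0, and let f : K_n → Â be a map into the group of continuous characters of A such that for every (n−k)-dimensional face S of {0,1}ⁿ that is contained in K_n one has ∏_{v ∈ S} f(v)^{ε(v)} = 1 (the trivial character), where ε(v) = (−1)^{h(v)}. Then ∏_{v ∈ K_n} f(v)(c(v))^{ε(v)} = 1 in the circle group. -/
open scoped BigOperators

/-!
Möbius inversion on the subsets of coordinates writes `c v = ∑_{W ⊆ supp v} b W`. The degree-`k`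
condition kills `b W` for `#W > k` (the alternating sum of `c` over the face spanned by `W`
splits into sums over `(k+1)`-faces), and `c 0 = 0` kills `b ∅`. Exchanging the products, the
pairing becomes `∏_W ∏_{v ⊇ W} f v (b W) ^ ε v`. For `1 ≤ #W ≤ k` the vertices `v ⊇ W` form a
face of dimension `n - #W ≥ n - k` missing `0`, which splits into `(n-k)`-faces missing `0`, and
on each of those the alternating product of the characters is trivial.
-/

open Finset

theorem AddChar.map_sum_eq_prod {ι A M : Type*} [AddCommMonoid A] [CommMonoid M]
    (ψ : AddChar A M) (s : Finset ι) (g : ι → A) :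
    ψ (∑ i ∈ s, g i) = ∏ i ∈ s, ψ (g i) := by
  induction s using Finset.cons_induction with
  | empty => simp
  | cons i s hi ih => rw [sum_cons, prod_cons, AddChar.map_add_eq_mul, ih]

section Moebius

variable {α B : Type*} [DecidableEq α] [AddCommGroup B]

/-- Möbius inversion of `g` on the subset lattice; the sign `(-1) ^ (#W + #U)` is
`(-1) ^ (#W - #U)` written without truncated subtraction. -/
def powersetMoebius (g : Finset α → B) (W : Finset α) : B :=
  ∑ U ∈ W.powerset, (-1 : ℤ) ^ (#W + #U) • g U

theorem sum_Icc_neg_one_pow_card_add_card {U W : Finset α} (h : U ⊆ W) :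
    ∑ V ∈ Icc U W, (-1 : ℤ) ^ (#V + #U) = if U = W then 1 else 0 := by
  have hdisj : ∀ X ∈ (W \ U).powerset, Disjoint U X := fun X hX =>
    disjoint_of_subset_right (mem_powerset.1 hX) disjoint_sdiff
  have hinj : Set.InjOn (U ∪ ·) (W \ U).powerset := fun X hX Y hY hXY => by
    rw [← union_sdiff_cancel_left (hdisj X hX), ← union_sdiff_cancel_left (hdisj Y hY)]
    exact congrArg (· \ U) hXY
  rw [Icc_eq_image_powerset h, sum_image hinj]
  calc ∑ X ∈ (W \ U).powerset, (-1 : ℤ) ^ (#(U ∪ X) + #U)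
      = ∑ X ∈ (W \ U).powerset, (-1 : ℤ) ^ #X := sum_congr rfl fun X hX => by
        rw [card_union_of_disjoint (hdisj X hX), add_right_comm, pow_add,
          Even.neg_one_pow ⟨_, rfl⟩, one_mul]
    _ = if U = W then 1 else 0 := by
        rw [sum_powerset_neg_one_pow_card]
        exact if_congr (sdiff_eq_empty_iff_subset.trans ⟨h.antisymm, (· ▸ subset_rfl)⟩) rfl rfl

theorem sum_powerset_powersetMoebius (g : Finset α → B) (W : Finset α) :
    ∑ V ∈ W.powerset, powersetMoebius g V = g W := by
  calc ∑ V ∈ W.powerset, powersetMoebius g V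
      = ∑ U ∈ W.powerset, (∑ V ∈ Icc U W, (-1 : ℤ) ^ (#V + #U)) • g U := by
        simp only [powersetMoebius, sum_smul]
        exact sum_comm' fun V U => by
          simp only [mem_powerset, mem_Icc]
          exact ⟨fun ⟨hVW, hUV⟩ => ⟨⟨hUV, hVW⟩, hUV.trans hVW⟩, fun ⟨⟨hUV, hVW⟩, _⟩ => ⟨hVW, hUV⟩⟩
    _ = g W := by
        rw [sum_congr rfl fun U hU => by rw [sum_Icc_neg_one_pow_card_add_card (mem_powerset.1 hU)]]
        simp

end Moebius

namespace BoolCube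

variable {n : ℕ}

def face (J : Finset (Fin n)) (y : Fin n → Bool) : Finset (Fin n → Bool) :=
  {v | ∀ i ∉ J, v i = y i}

@[simp]
theorem mem_face {J : Finset (Fin n)} {y v : Fin n → Bool} :
    v ∈ face J y ↔ ∀ i ∉ J, v i = y i := by
  simp [face]

theorem face_subset_face {J J' : Finset (Fin n)} {y v : Fin n → Bool} (hJ : J' ⊆ J)
    (hv : v ∈ face J y) : face J' v ⊆ face J y := fun u hu => by
  simp only [mem_face] at hu hv ⊢
  exact fun i hi => (hu i fun h => hi (hJ h)).trans (hv i hi)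

theorem face_eq_face_iff {J : Finset (Fin n)} {u v : Fin n → Bool} :
    face J u = face J v ↔ u ∈ face J v := by
  refine ⟨fun h => h ▸ mem_face.2 fun _ _ => rfl, fun h => ?_⟩
  ext w
  simp only [mem_face] at h ⊢
  exact forall₂_congr fun i hi => by rw [h i hi]

@[to_additive]
theorem _root_.IsFace.prod_eq_one_of_subfaces {M : Type*} [CommMonoid M] {m d : ℕ} (hmd : m ≤ d)
    {S : Finset (Fin n → Bool)} (hS : IsFace d S) {g : (Fin n → Bool) → M}
    (hg : ∀ T, IsFace m T → T ⊆ S → ∏ v ∈ T, g v = 1) : ∏ v ∈ S, g v = 1 := by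
  obtain ⟨J, y, rfl, rfl⟩ := hS
  obtain ⟨J', hJ', rfl⟩ := exists_subset_card_eq hmd
  change ∏ v ∈ face J y, g v = 1
  rw [← prod_fiberwise_of_maps_to fun v hv => mem_image_of_mem (face J') hv]
  refine prod_eq_one fun T hT => ?_
  obtain ⟨v, hv, rfl⟩ := mem_image.1 hT
  have hsub := face_subset_face hJ' hv
  have hfiber : {u ∈ face J y | face J' u = face J' v} = face J' v := by
    ext u
    simp only [mem_filter, face_eq_face_iff]
    exact and_iff_right_of_imp (hsub ·)
  rw [hfiber]
  exact hg _ ⟨J', v, rfl, rfl⟩ hsub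

def finsetEquiv (n : ℕ) : Finset (Fin n) ≃ (Fin n → Bool) where
  toFun U i := decide (i ∈ U)
  invFun v := {i | v i = true}
  left_inv U := by ext; simp
  right_inv v := by funext i; simp

theorem ht_finsetEquiv (U : Finset (Fin n)) : ht (finsetEquiv n U) = #U := by
  simp [ht, finsetEquiv]

theorem finsetEquiv_empty : finsetEquiv n ∅ = fun _ => false := by
  funext i
  simp [finsetEquiv]

theorem mem_face_compl_true_iff {W : Finset (Fin n)} {v : Fin n → Bool} :
    v ∈ face Wᶜ (fun _ => true) ↔ W ⊆ (finsetEquiv n).symm v := by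
  simp [finsetEquiv, subset_iff]

theorem false_notMem_face_compl_true {W : Finset (Fin n)} (hW : W.Nonempty) :
    (fun _ => false) ∉ face Wᶜ (fun _ => true) := fun h => by
  obtain ⟨i, hi⟩ := hW
  simpa [hi] using mem_face.1 h i

theorem _root_.IsDegCube.powersetMoebius_eq_zero {B : Type*} [AddCommGroup B] {k : ℕ}
    {c : (Fin n → Bool) → B} (hc : IsDegCube k c) {W : Finset (Fin n)} (hW : k < #W) :
    powersetMoebius (c ∘ finsetEquiv n) W = 0 := by
  have hface : ∑ v ∈ face W (fun _ => false), (-1 : ℤ) ^ ht v • c v = 0 :=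
    IsFace.sum_eq_zero_of_subfaces hW ⟨W, _, rfl, rfl⟩ fun T hT _ => hc T hT
  calc powersetMoebius (c ∘ finsetEquiv n) W
      = (-1 : ℤ) ^ #W • ∑ U ∈ W.powerset, (-1 : ℤ) ^ #U • c (finsetEquiv n U) := by
        simp only [powersetMoebius, smul_sum, pow_add, mul_smul, Function.comp_apply]
    _ = (-1 : ℤ) ^ #W • ∑ v ∈ face W (fun _ => false), (-1 : ℤ) ^ ht v • c v := by
        congr 1
        exact sum_equiv (finsetEquiv n) (fun U => by
          simpa [finsetEquiv, subset_iff] using forall_congr' fun _ => not_imp_not.symm)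
          fun U _ => by rw [ht_finsetEquiv]
    _ = 0 := by rw [hface, smul_zero]

end BoolCube

open BoolCube in
theorem IsDegCube.prod_addChar_zpow_eq_one {A M : Type*} [AddCommGroup A] [DivisionCommMonoid M]
    {n k : ℕ} {c : (Fin n → Bool) → A} (hc : IsDegCube k c) (hc0 : c (fun _ => false) = 0)
    (χ : (Fin n → Bool) → AddChar A M)
    (hface : ∀ S : Finset (Fin n → Bool), IsFace (n - k) S → (fun _ => false) ∉ S →
      ∀ a : A, ∏ v ∈ S, χ v a ^ ((-1 : ℤ) ^ ht v) = 1) :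
    ∏ v ∈ univ.filter (fun v : Fin n → Bool => v ≠ fun _ => false),
      χ v (c v) ^ ((-1 : ℤ) ^ ht v) = 1 := by
  set e := finsetEquiv n
  set b := powersetMoebius (c ∘ e)
  have hexpand : ∀ v, c v = ∑ W ∈ (e.symm v).powerset, b W := fun v => by
    rw [sum_powerset_powersetMoebius, Function.comp_apply, Equiv.apply_symm_apply]
  have hb_empty : b ∅ = 0 := by
    simpa [hc0, e, finsetEquiv_empty] using sum_powerset_powersetMoebius (c ∘ e) ∅
  rw [prod_filter_of_ne fun v _ => by rintro hv rfl; simp [hc0] at hv]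
  calc ∏ v, χ v (c v) ^ ((-1 : ℤ) ^ ht v)
      = ∏ v, ∏ W ∈ (e.symm v).powerset, χ v (b W) ^ ((-1 : ℤ) ^ ht v) := by
        simp_rw [hexpand, AddChar.map_sum_eq_prod, prod_zpow]
    _ = ∏ W, ∏ v ∈ face Wᶜ (fun _ => true), χ v (b W) ^ ((-1 : ℤ) ^ ht v) :=
        prod_comm' fun v W => by
          simpa only [mem_univ, true_and, and_true, mem_powerset] using mem_face_compl_true_iff.symm
    _ = 1 := prod_eq_one fun W _ => ?_
  by_cases hbW : b W = 0
  · simp [hbW]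
  have hW : W.Nonempty := nonempty_iff_ne_empty.2 fun h => hbW (h ▸ hb_empty)
  have hWk : #W ≤ k := not_lt.1 fun h => hbW (hc.powersetMoebius_eq_zero h)
  refine IsFace.prod_eq_one_of_subfaces (Nat.sub_le_sub_left hWk n)
    ⟨Wᶜ, _, by rw [card_compl, Fintype.card_fin], rfl⟩ fun T hT hTS => ?_
  exact hface T hT (fun h => false_notMem_face_compl_true hW (hTS h)) (b W)

theorem character_cube_pairing_corner_general
    {A : Type*} [AddCommGroup A]
    (n : ℕ) (k : ℕ)
    (c : (Fin n → Bool) → A) (hc : IsDegCube k c) (hc0 : c (fun _ => false) = 0)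
    (f : (Fin n → Bool) → A → ℂ)
    (hχnorm : ∀ v, (v ≠ fun _ => false) → ∀ a, ‖f v a‖ = 1)
    (hχmul : ∀ v, (v ≠ fun _ => false) → ∀ a b, f v (a + b) = f v a * f v b)
    (hface : ∀ S : Finset (Fin n → Bool), IsFace (n - k) S →
      (fun _ => false) ∉ S →
      ∀ a : A, ∏ v ∈ S, (f v a) ^ ((-1 : ℤ) ^ ht v) = 1) :
    ∏ v ∈ Finset.univ.filter (fun v : Fin n → Bool => v ≠ fun _ => false),
      (f v (c v)) ^ ((-1 : ℤ) ^ ht v) = 1 := by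
  have hf0 : ∀ v, (v ≠ fun _ => false) → f v 0 = 1 := fun v hv =>
    (mul_eq_left₀ (norm_ne_zero_iff.1 (by rw [hχnorm v hv 0]; exact one_ne_zero))).1
      (by rw [← hχmul v hv, add_zero])
  let χ : (Fin n → Bool) → AddChar A ℂ := fun v =>
    if hv : v = fun _ => false then 1 else ⟨f v, hf0 v hv, hχmul v hv⟩
  have hχ : ∀ v, (v ≠ fun _ => false) → ⇑(χ v) = f v := fun v hv => by simp [χ, hv]
  have hχface : ∀ S : Finset (Fin n → Bool), IsFace (n - k) S → (fun _ => false) ∉ S →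
      ∀ a : A, ∏ v ∈ S, χ v a ^ ((-1 : ℤ) ^ ht v) = 1 := fun S hS h0 a => by
    rw [← hface S hS h0 a]
    exact prod_congr rfl fun v hv => by rw [hχ v (ne_of_mem_of_not_mem hv h0)]
  rw [← hc.prod_addChar_zpow_eq_one hc0 χ hχface]
  exact prod_congr rfl fun v hv => by rw [hχ v (mem_filter.1 hv).2]

/-- if `c : {0,1}ⁿ → A` is a degree-`k` cube with `c(0) = 0` in a compact
abelian group `A` and `f` assigns a continuous character of `A` to each vertex of
`K_n = {0,1}ⁿ \ {0}` so that the alternating product of the characters over every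
`(n−k)`-dimensional face contained in `K_n` is the trivial character, then
`∏_{v ∈ K_n} f(v)(c(v))^{(−1)^{h(v)}} = 1`. -/
theorem character_cube_pairing_corner
    {A : Type*} [AddCommGroup A] [TopologicalSpace A] [IsTopologicalAddGroup A]
    [CompactSpace A] [T2Space A] [SecondCountableTopology A]
    (n : ℕ) (hn : 1 ≤ n) (k : ℕ) (hk : k ≤ n - 1)
    (c : (Fin n → Bool) → A) (hc : IsDegCube k c) (hc0 : c (fun _ => false) = 0)
    (f : (Fin n → Bool) → A → ℂ)
    (hχcont : ∀ v, (v ≠ fun _ => false) → Continuous (f v))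
    (hχnorm : ∀ v, (v ≠ fun _ => false) → ∀ a, ‖f v a‖ = 1)
    (hχmul : ∀ v, (v ≠ fun _ => false) → ∀ a b, f v (a + b) = f v a * f v b)
    (hface : ∀ S : Finset (Fin n → Bool), IsFace (n - k) S →
      (fun _ => false) ∉ S →
      ∀ a : A, ∏ v ∈ S, (f v a) ^ ((-1 : ℤ) ^ ht v) = 1) :
    ∏ v ∈ Finset.univ.filter (fun v : Fin n → Bool => v ≠ fun _ => false),
      (f v (c v)) ^ ((-1 : ℤ) ^ ht v) = 1 :=
  character_cube_pairing_corner_general n k c hc hc0 f hχnorm hχmul hface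
end
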